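/- If the minimum over all bijections γ between two finite multisets D₁ and D₂ of points in ℝ² (extended by diagonal points so bijections exist) of the total squared Euclidean distance Σ_{p∈D₁} ‖p − γ(p)‖² equals zero, then D₁ = D₂ as multisets. -/
import Mathlib


/-- Squared Euclidean distance on `ℝ × ℝ`. -/
noncomputable def sqdist (p q : ℝ × ℝ) : ℝ := (p.1 - q.1)^2 + (p.2 - q.2)^2

/-- If a matching (a bijection between `D₁ ∪ Δ₁` and `D₂ ∪ Δ₂`, where the `Δᵢ`
consist of diagonal points, encoded as a multiset `M` of matched pairs) realizes
the minimum total squared distance and this minimum is zero, then `D₁ = D₂`.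
The diagrams `D₁, D₂` consist of off-diagonal points. -/
theorem stmt0 (D1 D2 Δ1 Δ2 : Multiset (ℝ × ℝ))
    (hD1 : ∀ p ∈ D1, p.1 ≠ p.2) (hD2 : ∀ p ∈ D2, p.1 ≠ p.2)
    (hΔ1 : ∀ p ∈ Δ1, p.1 = p.2) (hΔ2 : ∀ p ∈ Δ2, p.1 = p.2)
    (M : Multiset ((ℝ × ℝ) × (ℝ × ℝ)))
    (hfst : M.map Prod.fst = D1 + Δ1) (hsnd : M.map Prod.snd = D2 + Δ2)
    (hcost : (M.map fun pq => sqdist pq.1 pq.2).sum = 0) :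
    D1 = D2 := by
  classical
  have hnn : ∀ x ∈ M.map fun pq => sqdist pq.1 pq.2, (0:ℝ) ≤ x := by
    intro x hx
    obtain ⟨pq, _, rfl⟩ := Multiset.mem_map.mp hx
    exact add_nonneg (sq_nonneg _) (sq_nonneg _)
  have hpairs : ∀ pq ∈ M, (Prod.fst pq : ℝ × ℝ) = Prod.snd pq := by
    intro pq hpq
    have hmem : sqdist pq.1 pq.2 ∈ M.map fun pq => sqdist pq.1 pq.2 :=
      Multiset.mem_map_of_mem _ hpq
    have hle : sqdist pq.1 pq.2 ≤ (M.map fun pq => sqdist pq.1 pq.2).sum :=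
      Multiset.single_le_sum hnn _ hmem
    have h0 : sqdist pq.1 pq.2 = 0 :=
      le_antisymm (hcost ▸ hle) (hnn _ hmem)
    unfold sqdist at h0
    have h1 : (pq.1.1 - pq.2.1)^2 = 0 ∧ (pq.1.2 - pq.2.2)^2 = 0 := by
      constructor <;> nlinarith [sq_nonneg (pq.1.1 - pq.2.1), sq_nonneg (pq.1.2 - pq.2.2)]
    have e1 : pq.1.1 = pq.2.1 := by nlinarith [h1.1]
    have e2 : pq.1.2 = pq.2.2 := by nlinarith [h1.2]
    exact Prod.ext e1 e2
  have hmaps : M.map Prod.fst = M.map Prod.snd := Multiset.map_congr rfl hpairs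
  have heq : D1 + Δ1 = D2 + Δ2 := by rw [← hfst, ← hsnd, hmaps]
  have hfil : (D1 + Δ1).filter (fun p => p.1 ≠ p.2)
      = (D2 + Δ2).filter (fun p => p.1 ≠ p.2) := by rw [heq]
  have h1 : (D1 + Δ1).filter (fun p => p.1 ≠ p.2) = D1 := by
    rw [Multiset.filter_add, Multiset.filter_eq_self.mpr hD1,
      Multiset.filter_eq_nil.mpr (fun p hp h => h (hΔ1 p hp)), add_zero]
  have h2 : (D2 + Δ2).filter (fun p => p.1 ≠ p.2) = D2 := by
    rw [Multiset.filter_add, Multiset.filter_eq_self.mpr hD2,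
      Multiset.filter_eq_nil.mpr (fun p hp h => h (hΔ2 p hp)), add_zero]
  rw [← h1, ← h2, hfil]
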